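/- Let γ > 0 and let k > 0 be real, λ = k². Let F : ℂ → ℂ be the regular solution for ℓ = 0 and eigenvalue λ (entire, satisfying z²F''(z) + 2zF'(z) + 2γzF(z) + λz²F(z) = 0 for all z ∈ ℂ and F(0) = 1), and let u : (0,∞) → ℂ be a Kodaira solution for parameter k. Then for every r > 0 the modified Wronskian r²(F'(r)u(r) − F(r)u'(r)) is nonzero; that is, the Wronskian coefficient a(k) = Wr(F_{0,λ}, U_k) is nonzero for all k > 0. -/

import Mathlib

noncomputable section

open Set Filter Complex

/-- `u : (0,∞) → ℂ` is a Kodaira solution for parameter `k`: a smooth solution of the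
`ℓ = 0` radial Schrödinger equation `−u'' − (2/r)u' − (2γ/r)u = k²u` on `(0,∞)` with
`u(r)·r·exp(−ikr − i(γ/k)log r) → 1` as `r → ∞`. -/
def IsKodaira (γ : ℝ) (k : ℂ) (u : ℝ → ℂ) : Prop :=
  ContDiffOn ℝ (⊤ : ℕ∞) u (Set.Ioi 0) ∧
  (∀ r : ℝ, 0 < r →
    -(deriv (deriv u) r) - ((2 / r : ℝ) : ℂ) * deriv u r - ((2 * γ / r : ℝ) : ℂ) * u r
      = k ^ 2 * u r) ∧
  Filter.Tendsto
    (fun r : ℝ => u r * (r : ℂ) *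
      Complex.exp (-(Complex.I * k * (r : ℂ)) - Complex.I * ((γ : ℂ) / k) * (Real.log r : ℂ)))
    Filter.atTop (nhds 1)

lemma wronskian_const (γ k : ℝ) (φ φ₁ ψ ψ₁ : ℝ → ℂ)
    (hφ : ∀ r ∈ Set.Ioi (0:ℝ), HasDerivAt φ (φ₁ r) r)
    (hφ₁ : ∀ r ∈ Set.Ioi (0:ℝ), HasDerivAt φ₁
      (-(2/(r:ℂ)) * φ₁ r - (2*(γ:ℂ)/(r:ℂ) + (k:ℂ)^2) * φ r) r)
    (hψ : ∀ r ∈ Set.Ioi (0:ℝ), HasDerivAt ψ (ψ₁ r) r)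
    (hψ₁ : ∀ r ∈ Set.Ioi (0:ℝ), HasDerivAt ψ₁
      (-(2/(r:ℂ)) * ψ₁ r - (2*(γ:ℂ)/(r:ℂ) + (k:ℂ)^2) * ψ r) r)
    {r₁ r₂ : ℝ} (h₁ : 0 < r₁) (h₂ : 0 < r₂) :
    (r₁:ℂ)^2 * (φ₁ r₁ * ψ r₁ - φ r₁ * ψ₁ r₁)
      = (r₂:ℂ)^2 * (φ₁ r₂ * ψ r₂ - φ r₂ * ψ₁ r₂) := by
  set W : ℝ → ℂ := fun r => (r:ℂ)^2 * (φ₁ r * ψ r - φ r * ψ₁ r) with hWdef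
  have hW : ∀ r ∈ Set.Ioi (0:ℝ), HasDerivAt W 0 r := by
    intro r hr
    have hr0 : (0:ℝ) < r := hr
    have hrne : (r:ℂ) ≠ 0 := Complex.ofReal_ne_zero.mpr hr0.ne'
    have hsq : HasDerivAt (fun t : ℝ => ((t:ℂ))^2) (2*(r:ℂ)) r := by
      simpa using (hasDerivAt_pow 2 (r:ℂ)).comp_ofReal
    have hprod : HasDerivAt (fun t => φ₁ t * ψ t - φ t * ψ₁ t)
        ((-(2/(r:ℂ)) * φ₁ r - (2*(γ:ℂ)/(r:ℂ) + (k:ℂ)^2) * φ r) * ψ r + φ₁ r * ψ₁ r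
          - (φ₁ r * ψ₁ r + φ r * (-(2/(r:ℂ)) * ψ₁ r - (2*(γ:ℂ)/(r:ℂ) + (k:ℂ)^2) * ψ r))) r :=
      ((hφ₁ r hr).mul (hψ r hr)).sub ((hφ r hr).mul (hψ₁ r hr))
    have := hsq.mul hprod
    refine this.congr_deriv ?_
    field_simp
    ring
  rcases le_total r₁ r₂ with h | h
  · exact (constant_of_has_deriv_right_zero
      (f := W) (a := r₁) (b := r₂)
      (fun x hx => ((hW x (lt_of_lt_of_le h₁ hx.1)).continuousAt).continuousWithinAt)
      (fun x hx => ((hW x (lt_of_lt_of_le h₁ hx.1)).hasDerivWithinAt))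
      r₂ ⟨h, le_rfl⟩).symm
  · exact constant_of_has_deriv_right_zero
      (f := W) (a := r₂) (b := r₁)
      (fun x hx => ((hW x (lt_of_lt_of_le h₂ hx.1)).continuousAt).continuousWithinAt)
      (fun x hx => ((hW x (lt_of_lt_of_le h₂ hx.1)).hasDerivWithinAt))
      r₁ ⟨h, le_rfl⟩

/-- conjugate of a solution is a solution -/
lemma star_solution (γ k : ℝ) (φ φ₁ : ℝ → ℂ)
    (hφ₁ : ∀ r ∈ Set.Ioi (0:ℝ), HasDerivAt φ₁
      (-(2/(r:ℂ)) * φ₁ r - (2*(γ:ℂ)/(r:ℂ) + (k:ℂ)^2) * φ r) r) :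
    ∀ r ∈ Set.Ioi (0:ℝ), HasDerivAt (fun t => (starRingEnd ℂ) (φ₁ t))
      (-(2/(r:ℂ)) * (starRingEnd ℂ) (φ₁ r)
        - (2*(γ:ℂ)/(r:ℂ) + (k:ℂ)^2) * (starRingEnd ℂ) (φ r)) r := by
  intro r hr
  have h := (hφ₁ r hr).star
  refine h.congr_deriv ?_
  simp only [RCLike.star_def, map_sub, map_mul, map_neg, map_div₀, map_add, map_pow,
    map_ofNat, map_inv₀, Complex.conj_ofReal]

lemma star_deriv (φ φ₁ : ℝ → ℂ) (r : ℝ) (hφ : HasDerivAt φ (φ₁ r) r) :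
    HasDerivAt (fun t => (starRingEnd ℂ) (φ t)) ((starRingEnd ℂ) (φ₁ r)) r := by
  simpa [RCLike.star_def] using hφ.star

/-- For real `k > 0` and `λ = k²`, the Wronskian coefficient
`a(k) = Wr(F_{0,λ}, U_k) = r²(F'u − Fu')` of the regular solution against a Kodaira
solution is nonzero (for every `r > 0`). -/
theorem wronskian_coefficient_nonzero (γ : ℝ) (hγ : 0 < γ) (k : ℝ) (hk : 0 < k)
    (F : ℂ → ℂ) (hF : Differentiable ℂ F)
    (hFeq : ∀ z : ℂ, z ^ 2 * deriv (deriv F) z + 2 * z * deriv F z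
        + 2 * (γ : ℂ) * z * F z + ((k : ℂ) ^ 2) * z ^ 2 * F z = 0)
    (hF0 : F 0 = 1)
    (u : ℝ → ℂ) (hu : IsKodaira γ (k : ℂ) u) :
    ∀ r : ℝ, 0 < r →
      (r : ℂ) ^ 2 * (deriv (fun t : ℝ => F (t : ℂ)) r * u r - F (r : ℂ) * deriv u r) ≠ 0 := by
  obtain ⟨hus, hueqn, hulim⟩ := hu
  have hIoi : IsOpen (Set.Ioi (0:ℝ)) := isOpen_Ioi
  have hus' : ContDiffOn ℝ (⊤ : ℕ∞) (deriv u) (Set.Ioi 0) := hus.deriv_of_isOpen hIoi (by simp)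
  -- derivative facts for u
  have hu_d : ∀ r ∈ Set.Ioi (0:ℝ), HasDerivAt u (deriv u r) r := fun r hr =>
    ((hus.differentiableOn (by simp)).differentiableAt (hIoi.mem_nhds hr)).hasDerivAt
  have hu_dd : ∀ r ∈ Set.Ioi (0:ℝ), HasDerivAt (deriv u) (deriv (deriv u) r) r := fun r hr =>
    ((hus'.differentiableOn (by simp)).differentiableAt (hIoi.mem_nhds hr)).hasDerivAt
  have huODE : ∀ r ∈ Set.Ioi (0:ℝ), HasDerivAt (deriv u)
      (-(2/(r:ℂ)) * deriv u r - (2*(γ:ℂ)/(r:ℂ) + (k:ℂ)^2) * u r) r := by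
    intro r hr
    have hr0 : (0:ℝ) < r := hr
    have h := hueqn r hr0
    push_cast at h
    have hval : deriv (deriv u) r
        = -(2/(r:ℂ)) * deriv u r - (2*(γ:ℂ)/(r:ℂ) + (k:ℂ)^2) * u r := by
      linear_combination -h
    exact hval ▸ hu_dd r hr
  -- derivative facts for F restricted to ℝ
  have hF' : Differentiable ℂ (deriv F) :=
    ((hF.contDiff (n := (⊤:ℕ∞))).iterate_deriv 1).differentiable (by simp)
  have hf_d : ∀ r : ℝ, HasDerivAt (fun t : ℝ => F (t:ℂ)) (deriv F r) r := fun r =>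
    (hF.differentiableAt.hasDerivAt).comp_ofReal
  have hf_dd : ∀ r ∈ Set.Ioi (0:ℝ), HasDerivAt (fun t : ℝ => deriv F (t:ℂ))
      (-(2/(r:ℂ)) * deriv F (r:ℂ) - (2*(γ:ℂ)/(r:ℂ) + (k:ℂ)^2) * F (r:ℂ)) r := by
    intro r hr
    have hr0 : (0:ℝ) < r := hr
    have hrne : (r:ℂ) ≠ 0 := Complex.ofReal_ne_zero.mpr hr0.ne'
    have h := hFeq (r:ℂ)
    have hval : deriv (deriv F) (r:ℂ)
        = -(2/(r:ℂ)) * deriv F (r:ℂ) - (2*(γ:ℂ)/(r:ℂ) + (k:ℂ)^2) * F (r:ℂ) := by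
      field_simp
      refine mul_left_cancel₀ hrne ?_
      linear_combination h
    exact hval ▸ (hF'.differentiableAt.hasDerivAt).comp_ofReal
  -- a point where F does not vanish
  obtain ⟨r₀, hr₀, hFr₀⟩ : ∃ r : ℝ, 0 < r ∧ F (r:ℂ) ≠ 0 := by
    by_contra hcon
    push_neg at hcon
    have han : AnalyticOnNhd ℂ F Set.univ := fun z _ => hF.analyticAt z
    have hfreq : ∃ᶠ z in nhdsWithin (1:ℂ) {(1:ℂ)}ᶜ, F z = 0 := by
      have hseq : Tendsto (fun n : ℕ => ((1 + 1/(n+1) : ℝ) : ℂ)) atTop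
          (nhdsWithin (1:ℂ) {(1:ℂ)}ᶜ) := by
        rw [tendsto_nhdsWithin_iff]
        constructor
        · have : Tendsto (fun n : ℕ => (1 + 1/(n+1) : ℝ)) atTop (nhds 1) := by
            simpa using (tendsto_const_nhds (x := (1:ℝ))).add (tendsto_one_div_add_atTop_nhds_zero_nat)
          have := (Complex.continuous_ofReal.tendsto 1).comp this
          simpa [Function.comp_def] using this
        · filter_upwards with n
          simp only [Set.mem_compl_iff, Set.mem_singleton_iff]
          intro hcon2
          have : (1 + 1/(n+1) : ℝ) = 1 := by exact_mod_cast hcon2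
          have hpos : (0:ℝ) < 1/(n+1) := by positivity
          linarith
      apply hseq.frequently
      apply Frequently.of_forall
      intro n
      exact hcon _ (by positivity)
    have := han.eqOn_zero_of_preconnected_of_frequently_eq_zero isPreconnected_univ
      (Set.mem_univ (1:ℂ)) hfreq
    have h0 := this (Set.mem_univ (0:ℂ))
    rw [hF0] at h0
    exact one_ne_zero h0
  have hr₀' : r₀ ∈ Set.Ioi (0:ℝ) := hr₀
  have hr₀ne : (r₀:ℂ) ≠ 0 := Complex.ofReal_ne_zero.mpr hr₀.ne'
  -- Wronskian of F with conj F vanishes identically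
  have hstarF := star_solution γ k (fun t : ℝ => F (t:ℂ)) (fun t : ℝ => deriv F (t:ℂ)) hf_dd
  have hstarF1 : ∀ r ∈ Set.Ioi (0:ℝ),
      HasDerivAt (fun t : ℝ => (starRingEnd ℂ) (F (t:ℂ))) ((starRingEnd ℂ) (deriv F (r:ℂ))) r :=
    fun r hr => star_deriv (fun t : ℝ => F (t:ℂ)) (fun t : ℝ => deriv F (t:ℂ)) r (hf_d r)
  have hWFg : ∀ r ∈ Set.Ioi (0:ℝ),
      (r:ℂ)^2 * (deriv F (r:ℂ) * (starRingEnd ℂ) (F (r:ℂ))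
        - F (r:ℂ) * (starRingEnd ℂ) (deriv F (r:ℂ))) = 0 := by
    set Wg : ℝ → ℂ := fun r : ℝ => (r:ℂ)^2 * (deriv F (r:ℂ) * (starRingEnd ℂ) (F (r:ℂ))
        - F (r:ℂ) * (starRingEnd ℂ) (deriv F (r:ℂ))) with hWgdef
    have hconst : ∀ r ∈ Set.Ioi (0:ℝ), Wg r = Wg r₀ := fun r hr =>
      wronskian_const γ k _ _ _ _ (fun s hs => hf_d s) hf_dd hstarF1 hstarF hr hr₀
    have cF : Continuous (fun r : ℝ => F (r:ℂ)) := hF.continuous.comp Complex.continuous_ofReal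
    have cF' : Continuous (fun r : ℝ => deriv F (r:ℂ)) :=
      hF'.continuous.comp Complex.continuous_ofReal
    have hcont : Continuous (fun r : ℝ => deriv F (r:ℂ) * (starRingEnd ℂ) (F (r:ℂ))
        - F (r:ℂ) * (starRingEnd ℂ) (deriv F (r:ℂ))) :=
      (cF'.mul (continuous_star.comp cF)).sub (cF.mul (continuous_star.comp cF'))
    have hsq0 : Tendsto (fun r : ℝ => ((r:ℂ))^2) (nhdsWithin 0 (Set.Ioi 0)) (nhds 0) := by
      have : Continuous (fun r : ℝ => ((r:ℂ))^2) := (Complex.continuous_ofReal.pow 2)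
      simpa using (this.tendsto 0).mono_left nhdsWithin_le_nhds
    have htend0 : Tendsto Wg (nhdsWithin 0 (Set.Ioi 0)) (nhds 0) := by
      simpa using hsq0.mul ((hcont.tendsto 0).mono_left nhdsWithin_le_nhds)
    have hev : ∀ᶠ r in nhdsWithin (0:ℝ) (Set.Ioi 0), Wg r = Wg r₀ :=
      eventually_nhdsWithin_of_forall hconst
    have htendc : Tendsto (fun _ : ℝ => Wg r₀) (nhdsWithin (0:ℝ) (Set.Ioi 0)) (nhds 0) :=
      (tendsto_congr' hev).mp htend0
    have hWg0 : Wg r₀ = 0 := tendsto_nhds_unique tendsto_const_nhds htendc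
    intro r hr
    show Wg r = 0
    rw [hconst r hr, hWg0]
  intro r hr habs
  rw [(hf_d r).deriv] at habs
  have hWFu : ∀ s ∈ Set.Ioi (0:ℝ),
      (s:ℂ)^2 * (deriv F (s:ℂ) * u s - F (s:ℂ) * deriv u s) = 0 := by
    intro s hs
    calc (s:ℂ)^2 * (deriv F (s:ℂ) * u s - F (s:ℂ) * deriv u s)
        = (r:ℂ)^2 * (deriv F (r:ℂ) * u r - F (r:ℂ) * deriv u r) :=
          wronskian_const γ k _ _ _ _ (fun t ht => hf_d t) hf_dd hu_d huODE hs hr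
      _ = 0 := habs
  have e1 : deriv F (r₀:ℂ) * u r₀ - F (r₀:ℂ) * deriv u r₀ = 0 :=
    (mul_eq_zero.mp (hWFu r₀ hr₀')).resolve_left (pow_ne_zero _ hr₀ne)
  have e2 : deriv F (r₀:ℂ) * (starRingEnd ℂ) (F (r₀:ℂ))
      - F (r₀:ℂ) * (starRingEnd ℂ) (deriv F (r₀:ℂ)) = 0 :=
    (mul_eq_zero.mp (hWFg r₀ hr₀')).resolve_left (pow_ne_zero _ hr₀ne)
  have e1' : (starRingEnd ℂ) (deriv F (r₀:ℂ)) * (starRingEnd ℂ) (u r₀)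
      - (starRingEnd ℂ) (F (r₀:ℂ)) * (starRingEnd ℂ) (deriv u r₀) = 0 := by
    have := congrArg (starRingEnd ℂ) e1
    simpa [map_sub, map_mul] using this
  have hFr₀c : (starRingEnd ℂ) (F (r₀:ℂ)) ≠ 0 := by
    rw [starRingEnd_apply]; exact star_ne_zero.mpr hFr₀
  have key : F (r₀:ℂ) * (starRingEnd ℂ) (F (r₀:ℂ)) *
      (deriv u r₀ * (starRingEnd ℂ) (u r₀) - u r₀ * (starRingEnd ℂ) (deriv u r₀)) = 0 := by
    linear_combination (-((starRingEnd ℂ) (F (r₀:ℂ)) * (starRingEnd ℂ) (u r₀))) * e1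
      + (F (r₀:ℂ) * u r₀) * e1' + (u r₀ * (starRingEnd ℂ) (u r₀)) * e2
  have hWuu0 : deriv u r₀ * (starRingEnd ℂ) (u r₀)
      - u r₀ * (starRingEnd ℂ) (deriv u r₀) = 0 :=
    (mul_eq_zero.mp key).resolve_left (mul_ne_zero hFr₀ hFr₀c)
  have hstaru := star_solution γ k u (deriv u) huODE
  have hstaru1 : ∀ s ∈ Set.Ioi (0:ℝ), HasDerivAt (fun t => (starRingEnd ℂ) (u t))
      ((starRingEnd ℂ) (deriv u s)) s := fun s hs => star_deriv u (deriv u) s (hu_d s hs)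
  have hsym : ∀ s ∈ Set.Ioi (0:ℝ),
      deriv u s * (starRingEnd ℂ) (u s) = u s * (starRingEnd ℂ) (deriv u s) := by
    intro s hs
    have hconst := wronskian_const γ k u (deriv u) (fun t => (starRingEnd ℂ) (u t))
      (fun t => (starRingEnd ℂ) (deriv u t)) hu_d huODE hstaru1 hstaru hs hr₀'
    have hzero : (s:ℂ)^2 * (deriv u s * (starRingEnd ℂ) (u s)
        - u s * (starRingEnd ℂ) (deriv u s)) = 0 := by
      rw [hconst, hWuu0, mul_zero]
    have hs0 : (0:ℝ) < s := hs
    have hsne : ((s:ℂ))^2 ≠ 0 := pow_ne_zero _ (Complex.ofReal_ne_zero.mpr hs0.ne')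
    exact sub_eq_zero.mp ((mul_eq_zero.mp hzero).resolve_left hsne)
  -- asymptotic contradiction
  set E : ℝ → ℂ := fun s => -(Complex.I * (k:ℂ) * (s:ℂ))
      - Complex.I * ((γ:ℂ)/(k:ℂ)) * (Real.log s : ℂ) with hEdef
  set B : ℝ → ℂ := fun s => u s * (s:ℂ) * Complex.exp (E s) with hBdef
  have hB1 : Tendsto B atTop (nhds 1) := hulim
  have hBne : ∀ᶠ s in atTop, B s ≠ 0 := hB1.eventually_ne one_ne_zero
  obtain ⟨R₁, hR₁⟩ := eventually_atTop.mp hBne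
  set R : ℝ := max R₁ 1 with hRdef
  have hRpos : (0:ℝ) < R := lt_of_lt_of_le one_pos (le_max_right _ _)
  have hune : ∀ s, R ≤ s → u s ≠ 0 := by
    intro s hs hu0
    apply hR₁ s (le_trans (le_max_left _ _) hs)
    simp [hBdef, hu0]
  set c : ℂ := u R / (starRingEnd ℂ) (u R) with hcdef
  have hqconst : ∀ s, R ≤ s → u s / (starRingEnd ℂ) (u s) = c := by
    have hqd : ∀ t, R ≤ t → HasDerivAt (fun x => u x / (starRingEnd ℂ) (u x)) 0 t := by
      intro t ht
      have ht0 : (0:ℝ) < t := lt_of_lt_of_le hRpos ht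
      have htI : t ∈ Set.Ioi (0:ℝ) := ht0
      have hut : u t ≠ 0 := hune t ht
      have hutc : (starRingEnd ℂ) (u t) ≠ 0 := by
        rw [starRingEnd_apply]; exact star_ne_zero.mpr hut
      have h1 := hu_d t htI
      have h2 : HasDerivAt (fun x => (starRingEnd ℂ) (u x)) ((starRingEnd ℂ) (deriv u t)) t :=
        star_deriv u (deriv u) t h1
      have h4 := h1.div h2 hutc
      refine h4.congr_deriv ?_
      have hsymt := hsym t htI
      rw [hsymt, sub_self, zero_div]
    intro s hs
    exact constant_of_has_deriv_right_zero
      (f := fun x => u x / (starRingEnd ℂ) (u x)) (a := R) (b := s)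
      (fun x hx => (hqd x hx.1).continuousAt.continuousWithinAt)
      (fun x hx => (hqd x hx.1).hasDerivWithinAt) s ⟨hs, le_rfl⟩
  have hBconj : Tendsto (fun s => (starRingEnd ℂ) (B s)) atTop (nhds 1) := by
    have h := (continuous_star.tendsto (1:ℂ)).comp hB1
    simp only [Function.comp_def, star_one] at h
    simp only [starRingEnd_apply]
    exact h
  have hBB : Tendsto (fun s => B s * B s * (B s * (starRingEnd ℂ) (B s))⁻¹) atTop (nhds 1) := by
    have := (hB1.mul hB1).mul ((hB1.mul hBconj).inv₀ (by norm_num))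
    simpa using this
  have hEq : ∀ᶠ s in atTop, B s * B s * (B s * (starRingEnd ℂ) (B s))⁻¹
      = c * (Complex.exp (E s))^2 := by
    filter_upwards [eventually_ge_atTop R] with s hs
    have hs0 : (0:ℝ) < s := lt_of_lt_of_le hRpos hs
    have hsne : ((s:ℂ)) ≠ 0 := Complex.ofReal_ne_zero.mpr hs0.ne'
    have hut : u s ≠ 0 := hune s hs
    have hutc : (starRingEnd ℂ) (u s) ≠ 0 := by
      rw [starRingEnd_apply]; exact star_ne_zero.mpr hut
    have hconjE : (starRingEnd ℂ) (Complex.exp (E s)) = (Complex.exp (E s))⁻¹ := by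
      rw [← Complex.exp_conj, ← Complex.exp_neg]
      congr 1
      simp only [hEdef, map_sub, map_mul, map_neg, map_div₀, Complex.conj_ofReal, Complex.conj_I]
      ring
    rw [← hqconst s hs]
    simp only [hBdef]
    rw [map_mul, map_mul, hconjE, Complex.conj_ofReal]
    field_simp [Complex.exp_ne_zero]
  have hc : Tendsto (fun s => c * (Complex.exp (E s))^2) atTop (nhds 1) := hBB.congr' hEq
  have hcne : c ≠ 0 := by
    intro hc0
    rw [hc0] at hc
    simp only [zero_mul] at hc
    have h01 : (0:ℂ) = 1 := tendsto_nhds_unique tendsto_const_nhds hc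
    exact zero_ne_one h01
  have hexp : Tendsto (fun s => (Complex.exp (E s))^2) atTop (nhds c⁻¹) := by
    have := hc.const_mul c⁻¹
    simp only [← mul_assoc, inv_mul_cancel₀ hcne, one_mul, mul_one] at this
    exact this
  set s0 : ℝ := Real.pi / (2*k) with hs0def
  have hs0pos : 0 < s0 := by positivity
  have hshift : Tendsto (fun s => (Complex.exp (E (s + s0)))^2) atTop (nhds c⁻¹) :=
    hexp.comp (tendsto_atTop_add_const_right atTop s0 tendsto_id)
  have hratio1 : Tendsto (fun s => (Complex.exp (E (s + s0)))^2 * ((Complex.exp (E s))^2)⁻¹)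
      atTop (nhds 1) := by
    have := hshift.mul (hexp.inv₀ (inv_ne_zero hcne))
    simpa [inv_inv, inv_mul_cancel₀ hcne] using this
  have hkne : ((k:ℂ)) ≠ 0 := Complex.ofReal_ne_zero.mpr hk.ne'
  have hlog : Tendsto (fun s : ℝ => Real.log (s + s0) - Real.log s) atTop (nhds 0) := by
    have h1 : ∀ᶠ s : ℝ in atTop, Real.log (s + s0) - Real.log s = Real.log (1 + s0/s) := by
      filter_upwards [eventually_gt_atTop (0:ℝ)] with s hs
      rw [← Real.log_div (by positivity) hs.ne']
      congr 1
      field_simp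
    have h2 : Tendsto (fun s : ℝ => 1 + s0/s) atTop (nhds 1) := by
      simpa using tendsto_const_nhds.add (tendsto_const_nhds.div_atTop (tendsto_id (α := ℝ)))
    have h3 := (Real.continuousAt_log (by norm_num : (1:ℝ) ≠ 0)).tendsto.comp h2
    rw [Real.log_one] at h3
    simp only [Function.comp_def] at h3
    exact h3.congr' (by filter_upwards [h1] with s hs; exact hs.symm)
  have hratio2 : Tendsto (fun s => (Complex.exp (E (s + s0)))^2 * ((Complex.exp (E s))^2)⁻¹)
      atTop (nhds (-1)) := by
    have heq2 : ∀ᶠ s : ℝ in atTop,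
        (Complex.exp (E (s + s0)))^2 * ((Complex.exp (E s))^2)⁻¹
          = Complex.exp (-(Real.pi : ℂ) * Complex.I
              + (-2*Complex.I*((γ:ℂ)/(k:ℂ))) * ((Real.log (s + s0) - Real.log s : ℝ) : ℂ)) := by
      filter_upwards [eventually_gt_atTop (0:ℝ)] with s hs
      rw [sq, sq, ← Complex.exp_add, ← Complex.exp_add, ← Complex.exp_neg, ← Complex.exp_add]
      congr 1
      have hks0 : (k:ℂ) * (s0:ℂ) = (Real.pi:ℂ)/2 := by
        rw [hs0def]; push_cast; field_simp
      simp only [hEdef]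
      push_cast
      linear_combination (-2*Complex.I) * hks0
    have hD : Tendsto (fun s : ℝ => ((Real.log (s + s0) - Real.log s : ℝ) : ℂ)) atTop (nhds 0) := by
      have := (Complex.continuous_ofReal.tendsto 0).comp hlog
      simpa [Function.comp_def] using this
    have hcontmap : Continuous (fun z : ℂ => Complex.exp (-(Real.pi : ℂ) * Complex.I
        + (-2*Complex.I*((γ:ℂ)/(k:ℂ))) * z)) :=
      Complex.continuous_exp.comp (continuous_const.add (continuous_const.mul continuous_id))
    have := (hcontmap.tendsto 0).comp hD
    simp only [Function.comp_def, mul_zero, add_zero] at this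
    have hval : Complex.exp (-(Real.pi : ℂ) * Complex.I) = -1 := by
      rw [show -(Real.pi : ℂ) * Complex.I = -((Real.pi : ℂ) * Complex.I) by ring,
        Complex.exp_neg, Complex.exp_pi_mul_I]
      norm_num
    rw [hval] at this
    exact this.congr' (Filter.EventuallyEq.symm heq2)
  have hfinal : (1:ℂ) = -1 := tendsto_nhds_unique hratio1 hratio2
  norm_num at hfinal
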